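/- arXiv:1311.4438 — 13 statements merged into one kernel-verified Lean document; each statement's English description precedes it below -/
import Mathlib

section
/- Let F ∈ F_q[x] have degree d ≥ 1. Suppose there exist θ ∈ F_q* and a monic polynomial T over the algebraic closure of F_q such that T(F(x)) = θ(x^q - x)F'(x) as polynomials. Then T(x) = ∏_{γ ∈ V_F}(x - γ), and F is a minimal value set polynomial, i.e., |V_F| = ⌊(q-1)/d⌋ + 1. -/
/-!
Comparing degrees in `T(F) = θ (x^q - x) F'` gives `deg T · d = q + deg F'` with `deg F' < d`.
Every value `F(a)` is a root of `T`, since `a^q = a`, so `|V_F| ≤ deg T`; and each value is taken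
at most `d` times, so `q ≤ d |V_F|`. Together these force `deg T = |V_F|`, so the monic `T` is the
product of `x - γ` over the values, and `deg T · d = q + deg F'` pins `deg T` down to
`⌊(q-1)/d⌋ + 1`.
-/

open Polynomial Finset

theorem Nat.eq_div_add_one_of_mul_eq {q d e m : ℕ} (hq : 0 < q) (hm : m < d)
    (h : e * d = q + m) : e = (q - 1) / d + 1 := by
  cases e with
  | zero => omega
  | succ k =>
    rw [add_mul, one_mul] at h
    have hk : (q - 1) / d = k := Nat.div_eq_of_lt_le (by omega) (by rw [add_mul, one_mul]; omega)
    omega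

namespace Polynomial

theorem natDegree_mul_natDegree_eq_of_comp_eq {K : Type*} [Field K] {T G : K[X]} {θ : K} {q : ℕ}
    (hT : T ≠ 0) (hG : 0 < G.natDegree) (hθ : θ ≠ 0) (hq : 1 < q)
    (h : T.comp G = C θ * (X ^ q - X) * derivative G) :
    T.natDegree * G.natDegree = q + (derivative G).natDegree := by
  have hcomp : T.comp G ≠ 0 := by
    rw [Ne, comp_eq_zero_iff]
    rintro (hT0 | ⟨-, hGC⟩)
    · exact hT hT0
    · exact hG.ne' (by rw [hGC, natDegree_C])
  have hG' : derivative G ≠ 0 := by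
    rintro hG0
    rw [hG0, mul_zero] at h
    exact hcomp h
  have hXq : (X ^ q - X : K[X]) ≠ 0 := FiniteField.X_pow_card_sub_X_ne_zero K hq
  rw [← natDegree_comp, h, natDegree_mul (mul_ne_zero (C_ne_zero.2 hθ) hXq) hG',
    natDegree_C_mul hθ, FiniteField.X_pow_card_sub_X_natDegree_eq K hq]

theorem eq_prod_X_sub_C_of_forall_isRoot {K : Type*} [Field K] {T : K[X]} {s : Finset K}
    (hT : T.Monic) (hsplit : T.Splits) (hroot : ∀ x ∈ s, T.IsRoot x) (hcard : T.natDegree ≤ #s) :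
    T = ∏ x ∈ s, (X - C x) := by
  have hle : s.val ≤ T.roots :=
    (Multiset.le_iff_subset s.nodup).2 fun x hx => (mem_roots hT.ne_zero).2 (hroot x hx)
  have hroots : T.roots = s.val :=
    (Multiset.eq_of_le_of_card_le hle (by rwa [splits_iff_card_roots.1 hsplit])).symm
  rw [hsplit.eq_prod_roots_of_monic hT, hroots]
  rfl

end Polynomial

theorem stmt_1 {Fq : Type*} [Field Fq] [Fintype Fq] [DecidableEq Fq]
    (q : ℕ) (hq : Fintype.card Fq = q)
    (F : Polynomial Fq) (d : ℕ) (hdeg : F.natDegree = d) (hd : 1 ≤ d)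
    (θ : Fq) (hθ : θ ≠ 0)
    (T : Polynomial (AlgebraicClosure Fq)) (hT : T.Monic)
    (heq : T.comp (F.map (algebraMap Fq (AlgebraicClosure Fq))) =
      Polynomial.C (algebraMap Fq (AlgebraicClosure Fq) θ) *
        (Polynomial.X ^ q - Polynomial.X) *
        Polynomial.derivative (F.map (algebraMap Fq (AlgebraicClosure Fq)))) :
    T = ∏ γ ∈ Finset.image (fun a => F.eval a) Finset.univ,
          (Polynomial.X - Polynomial.C (algebraMap Fq (AlgebraicClosure Fq) γ)) ∧
    (Finset.image (fun a => F.eval a) Finset.univ).card = (q - 1) / d + 1 := by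
  classical
  set φ := algebraMap Fq (AlgebraicClosure Fq)
  set V := univ.image fun a => F.eval a
  have hq1 : 1 < q := hq ▸ Fintype.one_lt_card
  have hFdeg : (F.map φ).natDegree = d := by rw [natDegree_map, hdeg]
  have hroot : ∀ γ ∈ V.image φ, T.IsRoot γ := by
    simp only [V, Finset.mem_image, Finset.mem_univ, true_and]
    rintro _ ⟨_, ⟨a, rfl⟩, rfl⟩
    simpa [eval_comp, eval_map_algebraMap, ← map_pow, ← hq, FiniteField.pow_card]
      using congrArg (eval (φ a)) heq
  have hdegT := natDegree_mul_natDegree_eq_of_comp_eq hT.ne_zero (by omega)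
    ((map_ne_zero φ).2 hθ) hq1 heq
  rw [hFdeg] at hdegT
  have hm : (derivative (F.map φ)).natDegree < d :=
    (natDegree_derivative_le _).trans_lt (by omega)
  have hcard : #(V.image φ) = #V := card_image_of_injective _ φ.injective
  have hVT : #V ≤ T.natDegree :=
    hcard ▸ card_le_degree_of_subset_roots fun γ hγ => (mem_roots hT.ne_zero).2 (hroot γ hγ)
  have hqV : q ≤ d * #V :=
    hdeg ▸ hq ▸ FiniteField.card_image_polynomial_eval (natDegree_pos_iff_degree_pos.1 (by omega))
  have hTV : T.natDegree = #V :=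
    le_antisymm (Nat.lt_succ_iff.1 (Nat.lt_of_mul_lt_mul_right (a := d) (by nlinarith))) hVT
  refine ⟨?_, ?_⟩
  · rw [eq_prod_X_sub_C_of_forall_isRoot hT (IsAlgClosed.splits T) hroot (hTV.trans hcard.symm).le,
      prod_image φ.injective.injOn]
  · rw [← hTV]
    exact Nat.eq_div_add_one_of_mul_eq (by omega) hm hdegT
end

section
/- Let F ∈ F_q[x] be nonconstant with value set V_F = {γ_0, ..., γ_r}, and suppose T(F) = θ(x^q - x)F' for some θ ∈ F_q* where T = ∏_{i=0}^r (x - γ_i). If α is a root of F - γ_i lying in the algebraic closure of F_q but not in F_q, and k is its multiplicity, then p divides k. -/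
/-! Pass to the algebraic closure and compare multiplicities of `α` on both sides of
`T ∘ F = θ (X^q - X) F'`. On the left, `T` has simple roots and `F α = γ`, so the multiplicity
is exactly `k`. On the right, `α^q ≠ α` because `α ∉ F_q`, so the multiplicity is that of
`F' = (F - γ)'`, which is `k - 1` unless `p ∣ k`. -/

open Polynomial

namespace Polynomial

variable {R : Type*} [CommRing R] [IsDomain R]

theorem rootMultiplicity_pow_eq_mul (f : R[X]) (n : ℕ) (a : R) :
    (f ^ n).rootMultiplicity a = n * f.rootMultiplicity a := by
  classical
  rw [← count_roots, roots_pow, Multiset.count_nsmul, count_roots]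

theorem rootMultiplicity_mul_of_not_isRoot {f g : R[X]} {a : R} (hfg : f * g ≠ 0)
    (hf : ¬ f.IsRoot a) : (f * g).rootMultiplicity a = g.rootMultiplicity a := by
  rw [rootMultiplicity_mul hfg, rootMultiplicity_eq_zero hf, zero_add]

theorem comp_ne_zero_of_natDegree_pos {g f : R[X]} (hg : g ≠ 0) (hf : 0 < f.natDegree) :
    g.comp f ≠ 0 := by
  rw [Ne, comp_eq_zero_iff]
  rintro (h | ⟨-, h⟩)
  · exact hg h
  · rw [h, natDegree_C] at hf
    exact hf.false

theorem rootMultiplicity_comp {g f : R[X]} (hg : g ≠ 0) (hf : 0 < f.natDegree) (a : R) :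
    (g.comp f).rootMultiplicity a =
      g.rootMultiplicity (f.eval a) * (f - C (f.eval a)).rootMultiplicity a := by
  classical
  obtain ⟨u, hgu, hu⟩ := exists_eq_pow_rootMultiplicity_mul_and_not_dvd g hg (f.eval a)
  have hcomp : g.comp f = (f - C (f.eval a)) ^ g.rootMultiplicity (f.eval a) * u.comp f := by
    conv_lhs => rw [hgu]
    rw [mul_comp, pow_comp, sub_comp, X_comp, C_comp]
  have hu_comp : ¬ (u.comp f).IsRoot a := by
    rwa [IsRoot, eval_comp, ← IsRoot, ← dvd_iff_isRoot]
  have hne : g.comp f ≠ 0 := comp_ne_zero_of_natDegree_pos hg hf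
  rw [hcomp, rootMultiplicity_mul (hcomp ▸ hne), rootMultiplicity_eq_zero hu_comp, add_zero,
    rootMultiplicity_pow_eq_mul]

theorem rootMultiplicity_prod_X_sub_C [DecidableEq R] {s : Finset R} {a : R} (ha : a ∈ s) :
    (∏ b ∈ s, (X - C b)).rootMultiplicity a = 1 := by
  rw [← count_roots, roots_prod_X_sub_C, Multiset.count_eq_one_of_mem s.nodup ha]

theorem rootMultiplicity_derivative_of_not_dvd {K : Type*} [Field K] (p : ℕ) [CharP K p]
    {f : K[X]} {a : K} (ha : f.IsRoot a) (hp : ¬ p ∣ f.rootMultiplicity a) :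
    (derivative f).rootMultiplicity a = f.rootMultiplicity a - 1 :=
  derivative_rootMultiplicity_of_root_of_mem_nonZeroDivisors ha <|
    mem_nonZeroDivisors_of_ne_zero <| by rwa [Ne, CharP.cast_eq_zero_iff K p]

end Polynomial

theorem FiniteField.mem_range_algebraMap_of_pow_card_eq {K L : Type*} [Field K] [Fintype K]
    [Field L] [Algebra K L] {x : L} (hx : x ^ Fintype.card K = x) :
    x ∈ Set.range (algebraMap K L) := by
  have hsplits : (X ^ Fintype.card K - X : K[X]).Splits := by
    rw [splits_iff_card_roots, roots_X_pow_card_sub_X,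
      X_pow_card_sub_X_natDegree_eq K Fintype.one_lt_card]
    rfl
  have hx_root : x ∈ ((X ^ Fintype.card K - X : K[X]).map (algebraMap K L)).roots := by
    rw [mem_roots (map_ne_zero (X_pow_card_sub_X_ne_zero K Fintype.one_lt_card))]
    simp [hx]
  obtain ⟨a, -, rfl⟩ := Multiset.mem_map.1 (hsplits.roots_map (algebraMap K L) ▸ hx_root)
  exact ⟨a, rfl⟩

theorem stmt_2_general {Fq : Type*} [Field Fq] [Fintype Fq] [DecidableEq Fq]
    (p q : ℕ) [CharP Fq p] (hq : Fintype.card Fq = q)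
    (F : Polynomial Fq) (hF : 0 < F.natDegree)
    (θ : Fq) (hθ : θ ≠ 0)
    (T : Polynomial Fq)
    (hT : T = ∏ γ ∈ Finset.image (fun a => F.eval a) Finset.univ,
            (Polynomial.X - Polynomial.C γ))
    (heq : T.comp F = Polynomial.C θ * (Polynomial.X ^ q - Polynomial.X) *
      Polynomial.derivative F)
    (γ : Fq) (hγ : γ ∈ Finset.image (fun a => F.eval a) Finset.univ)
    (α : AlgebraicClosure Fq)
    (hα : α ∉ Set.range (algebraMap Fq (AlgebraicClosure Fq)))
    (hroot : ((F - Polynomial.C γ).map (algebraMap Fq (AlgebraicClosure Fq))).IsRoot α)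
    (k : ℕ)
    (hk : k = ((F - Polynomial.C γ).map (algebraMap Fq (AlgebraicClosure Fq))).rootMultiplicity α) :
    p ∣ k := by
  set φ := algebraMap Fq (AlgebraicClosure Fq)
  rw [Polynomial.map_sub, map_C] at hroot hk
  have hFα : (F.map φ).eval α = φ γ := by rwa [IsRoot, eval_sub, eval_C, sub_eq_zero] at hroot
  have hTγ : (T.map φ).rootMultiplicity (φ γ) = 1 := by
    rw [← eq_rootMultiplicity_map φ.injective, hT, rootMultiplicity_prod_X_sub_C hγ]
  have heqK : (T.map φ).comp (F.map φ) =
      C (φ θ) * (X ^ q - X) * derivative (F.map φ - C (φ γ)) := by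
    simpa [map_comp, derivative_map] using congrArg (map φ) heq
  have hαq : ¬ (C (φ θ) * (X ^ q - X)).IsRoot α := by
    simp only [IsRoot, eval_mul, eval_C, eval_sub, eval_pow, eval_X]
    refine mul_ne_zero ((map_ne_zero φ).2 hθ) (sub_ne_zero.2 fun h => hα ?_)
    exact FiniteField.mem_range_algebraMap_of_pow_card_eq (hq ▸ h)
  have hTφ : T.map φ ≠ 0 := fun h => by simp [h] at hTγ
  have hFφ : 0 < (F.map φ).natDegree := by rwa [natDegree_map]
  have hmult := rootMultiplicity_comp hTφ hFφ α
  have hne := heqK ▸ comp_ne_zero_of_natDegree_pos hTφ hFφ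
  by_contra hpk
  have hk0 : k ≠ 0 := by rintro rfl; exact hpk (dvd_zero p)
  rw [heqK, rootMultiplicity_mul_of_not_isRoot hne hαq,
    rootMultiplicity_derivative_of_not_dvd p hroot (hk ▸ hpk), hFα, hTγ, one_mul, ← hk] at hmult
  omega

theorem stmt_2 {Fq : Type*} [Field Fq] [Fintype Fq] [DecidableEq Fq]
    (p q : ℕ) [Fact p.Prime] [CharP Fq p] (hq : Fintype.card Fq = q)
    (F : Polynomial Fq) (hF : 0 < F.natDegree)
    (θ : Fq) (hθ : θ ≠ 0)
    (T : Polynomial Fq)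
    (hT : T = ∏ γ ∈ Finset.image (fun a => F.eval a) Finset.univ,
            (Polynomial.X - Polynomial.C γ))
    (heq : T.comp F = Polynomial.C θ * (Polynomial.X ^ q - Polynomial.X) *
      Polynomial.derivative F)
    (γ : Fq) (hγ : γ ∈ Finset.image (fun a => F.eval a) Finset.univ)
    (α : AlgebraicClosure Fq)
    (hα : α ∉ Set.range (algebraMap Fq (AlgebraicClosure Fq)))
    (hroot : ((F - Polynomial.C γ).map (algebraMap Fq (AlgebraicClosure Fq))).IsRoot α)
    (k : ℕ)
    (hk : k = ((F - Polynomial.C γ).map (algebraMap Fq (AlgebraicClosure Fq))).rootMultiplicity α) :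
    p ∣ k :=
  stmt_2_general p q hq F hF θ hθ T hT heq γ hγ α hα hroot k hk
end

section
/- Let F ∈ F_q[x] be nonconstant with value set V_F = {γ_0, ..., γ_r}, and suppose T(F) = θ(x^q - x)F' for some θ ∈ F_q*, where T = ∏_{i=0}^r (x - γ_i). If a ∈ F_q is a root of F - γ_i of multiplicity k ≥ 1, then T'(γ_i) = -θk; in particular p does not divide k. -/
open Polynomial

theorem stmt_3 {Fq : Type*} [Field Fq] [Fintype Fq] [DecidableEq Fq]
    (p q : ℕ) [Fact p.Prime] [CharP Fq p] (hq : Fintype.card Fq = q)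
    (F : Polynomial Fq) (hF : 0 < F.natDegree)
    (θ : Fq) (hθ : θ ≠ 0)
    (T : Polynomial Fq)
    (hT : T = ∏ γ ∈ Finset.image (fun a => F.eval a) Finset.univ,
            (Polynomial.X - Polynomial.C γ))
    (heq : T.comp F = Polynomial.C θ * (Polynomial.X ^ q - Polynomial.X) *
      Polynomial.derivative F)
    (γ : Fq) (hγ : γ ∈ Finset.image (fun a => F.eval a) Finset.univ)
    (a : Fq) (hroot : (F - Polynomial.C γ).IsRoot a)
    (k : ℕ) (hk : k = (F - Polynomial.C γ).rootMultiplicity a) (hk1 : 1 ≤ k) :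
    (Polynomial.derivative T).eval γ = -θ * (k : Fq) ∧ ¬ p ∣ k := by
  set V : Finset Fq := Finset.image (fun a => F.eval a) Finset.univ with hV
  have hqz : (q : Fq) = 0 := hq ▸ FiniteField.cast_card_eq_zero Fq
  have hFa : F.eval a = γ := by
    have := hroot; simp [IsRoot, eval_sub, sub_eq_zero] at this; exact this
  have hFne : F - C γ ≠ 0 := by
    intro h
    have : F = C γ := by rwa [sub_eq_zero] at h
    rw [this, natDegree_C] at hF; exact lt_irrefl 0 hF
  -- factorization of F - C γ
  set G : Polynomial Fq := (F - C γ) /ₘ (X - C a) ^ k with hG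
  have hfac : (X - C a) ^ k * G = F - C γ := by
    rw [hG, hk]; exact pow_mul_divByMonic_rootMultiplicity_eq _ a
  have hGa : G.eval a ≠ 0 := by
    rw [hG, hk]; exact eval_divByMonic_pow_rootMultiplicity_ne_zero a hFne
  -- factorization of X^q - X
  have haq : (a : Fq) ^ q = a := by rw [← hq]; exact FiniteField.pow_card a
  set W : Polynomial Fq := (X ^ q - X) /ₘ (X - C a) with hW
  have hWfac : (X - C a) * W = (X ^ q - X : Polynomial Fq) := by
    rw [hW]; exact mul_divByMonic_eq_iff_isRoot.2 (by simp [IsRoot, haq])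
  have hWa : W.eval a = -1 := by
    have hd := congrArg derivative hWfac
    rw [derivative_mul, derivative_X_sub_C, one_mul] at hd
    have h3 : derivative (X ^ q - X : Polynomial Fq) = -1 := by
      rw [derivative_sub, derivative_X_pow, derivative_X, hqz, map_zero, zero_mul, zero_sub]
    rw [h3] at hd
    have := congrArg (eval a) hd
    simpa using this
  -- T.comp F as a product
  set R : Polynomial Fq := ∏ δ ∈ V.erase γ, (F - C δ) with hR
  have hTcomp : T.comp F = (F - C γ) * R := by
    rw [hT, prod_comp]
    simp only [sub_comp, X_comp, C_comp]
    exact (Finset.mul_prod_erase V _ hγ).symm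
  -- derivative of F
  have hF' : derivative F = (X - C a) ^ (k - 1) * (C (k : Fq) * G + (X - C a) * derivative G) := by
    have : derivative (F - C γ) = derivative F := by rw [derivative_sub, derivative_C, sub_zero]
    rw [← this, ← hfac, derivative_mul, derivative_X_sub_C_pow]
    have hkk : k = (k - 1) + 1 := (Nat.succ_pred_eq_of_pos hk1).symm
    rw [mul_add]
    congr 1
    · ring
    · conv_lhs => rw [hkk]
      ring
  -- rewrite heq and cancel (X - C a)^k
  have hkey : G * R = C θ * W * (C (k : Fq) * G + (X - C a) * derivative G) := by
    have h2 : (X - C a) ^ k * (G * R) =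
        (X - C a) ^ k * (C θ * W * (C (k : Fq) * G + (X - C a) * derivative G)) := by
      have hkk : k = (k - 1) + 1 := (Nat.succ_pred_eq_of_pos hk1).symm
      calc (X - C a) ^ k * (G * R) = (F - C γ) * R := by rw [← hfac]; ring
        _ = C θ * (X ^ q - X) * derivative F := by rw [← hTcomp, heq]
        _ = C θ * ((X - C a) * W) * ((X - C a) ^ (k - 1) *
              (C (k : Fq) * G + (X - C a) * derivative G)) := by rw [hWfac, hF']
        _ = (X - C a) ^ ((k-1)+1) * (C θ * W * (C (k : Fq) * G + (X - C a) * derivative G)) := by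
              ring
        _ = _ := by rw [← hkk]
    exact mul_left_cancel₀ (pow_ne_zero _ (X_sub_C_ne_zero a)) h2
  -- evaluate at a
  have heval : G.eval a * R.eval a = θ * -1 * ((k : Fq) * G.eval a) := by
    have := congrArg (eval a) hkey
    simpa [eval_mul, eval_add, hWa] using this
  have hRa : R.eval a = -θ * (k : Fq) := by
    have : G.eval a * R.eval a = G.eval a * (-θ * (k : Fq)) := by rw [heval]; ring
    exact mul_left_cancel₀ hGa this
  -- derivative of T at γ
  have hT' : (derivative T).eval γ = R.eval a := by
    rw [hT, Finset.prod_eq_multiset_prod]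
    rw [eval_multiset_prod_X_sub_C_derivative (by rwa [Finset.mem_def] at hγ)]
    rw [hR, eval_prod]
    simp only [eval_sub, eval_C, hFa]
    rw [Finset.prod_eq_multiset_prod, Finset.erase_val]
  have hmain : (derivative T).eval γ = -θ * (k : Fq) := hT'.trans hRa
  refine ⟨hmain, ?_⟩
  have hne : (derivative T).eval γ ≠ 0 := by
    rw [hT']
    rw [hR, eval_prod]
    apply Finset.prod_ne_zero_iff.2
    intro δ hδ
    simp only [eval_sub, eval_C, hFa]
    exact sub_ne_zero.2 (Finset.ne_of_mem_erase hδ).symm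
  intro hdvd
  have : (k : Fq) = 0 := (CharP.cast_eq_zero_iff Fq p k).2 hdvd
  rw [hmain, this, mul_zero] at hne
  exact hne rfl
end

section
/- Let F ∈ F_q[x] be nonconstant with value set V_F of size r+1 ≥ 2, and suppose T(F) = θ(x^q - x)F' for some θ ∈ F_q*, where T = ∏_{γ ∈ V_F}(x - γ). Then F' ≠ 0, and there exists some γ ∈ V_F with T'(γ) = -θ. -/
/-!
Since `T` is monic and `F` is nonconstant, `T(F) ≠ 0`, so `F' ≠ 0`. Comparing degrees,
`(r+1) deg F = q + deg F'` with `r + 1 ≥ 2` and `deg F' < deg F` forces `deg F < q`, so `F'` does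
not vanish at some `a ∈ F_q`. Differentiating the identity gives
`T'(F) F' = -θ F' + θ (x^q - x) F''`, and evaluating at `a` (a root of `x^q - x`) and cancelling
`F'(a)` yields `T'(F(a)) = -θ`.
-/

open Polynomial

namespace Polynomial

variable {R : Type*}

theorem comp_ne_zero_of_natDegree_pos_s4 [Semiring R] [NoZeroDivisors R] {T F : R[X]} (hT : T ≠ 0)
    (hF : 0 < F.natDegree) : T.comp F ≠ 0 := by
  rintro h
  rcases comp_eq_zero_iff.mp h with hT0 | ⟨-, hFC⟩
  · exact hT hT0
  · rw [hFC, natDegree_C] at hF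
    exact hF.false

theorem eval_derivative_mul_of_comp_eq_mul_derivative [CommRing R] {T F G : R[X]}
    (h : T.comp F = G * derivative F) {a : R} (ha : G.eval a = 0) :
    (derivative T).eval (F.eval a) * (derivative F).eval a =
      (derivative G).eval a * (derivative F).eval a := by
  have hder := congrArg (fun P => (derivative P).eval a) h
  simp only [derivative_comp, derivative_mul, eval_mul, eval_add, eval_comp, ha, zero_mul,
    add_zero] at hder
  rwa [mul_comm] at hder

theorem natDegree_lt_of_comp_eq_mul_derivative [CommRing R] [NoZeroDivisors R] {T F G : R[X]}
    (h : T.comp F = G * derivative F) (hTF : T.comp F ≠ 0) (hT : 2 ≤ T.natDegree)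
    (hF : 0 < F.natDegree) : F.natDegree < G.natDegree := by
  rw [h] at hTF
  have hdeg := congrArg natDegree h
  rw [natDegree_comp, natDegree_mul (left_ne_zero_of_mul hTF) (right_ne_zero_of_mul hTF)] at hdeg
  have hF' := natDegree_derivative_lt hF.ne'
  nlinarith

end Polynomial

theorem FiniteField.derivative_X_pow_card_sub_X (K : Type*) [Field K] [Fintype K] :
    derivative (X ^ Fintype.card K - X : K[X]) = -1 := by
  rw [derivative_sub, derivative_X, derivative_X_pow, Nat.cast_card_eq_zero K, C_0, zero_mul,
    zero_sub]

theorem stmt_4_general {Fq : Type*} [Field Fq] [Fintype Fq] [DecidableEq Fq]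
    (q : ℕ) (hq : Fintype.card Fq = q)
    (F : Polynomial Fq) (hF : 0 < F.natDegree)
    (hcard : 2 ≤ (Finset.image (fun a => F.eval a) Finset.univ).card)
    (θ : Fq)
    (T : Polynomial Fq)
    (hT : T = ∏ γ ∈ Finset.image (fun a => F.eval a) Finset.univ,
            (Polynomial.X - Polynomial.C γ))
    (heq : T.comp F = Polynomial.C θ * (Polynomial.X ^ q - Polynomial.X) *
      Polynomial.derivative F) :
    Polynomial.derivative F ≠ 0 ∧
    ∃ γ ∈ Finset.image (fun a => F.eval a) Finset.univ,
      (Polynomial.derivative T).eval γ = -θ := by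
  subst hq
  have hT_natDegree : T.natDegree = (Finset.univ.image fun a => F.eval a).card := by
    rw [hT, natDegree_prod _ _ fun γ _ => X_sub_C_ne_zero (R := Fq) γ]
    simp
  have hT_monic : T.Monic := hT ▸ monic_prod_of_monic _ _ fun γ _ => monic_X_sub_C γ
  have hTF : T.comp F ≠ 0 := comp_ne_zero_of_natDegree_pos_s4 hT_monic.ne_zero hF
  have hF' : derivative F ≠ 0 := right_ne_zero_of_mul (heq ▸ hTF)
  have hF_lt : F.natDegree < Fintype.card Fq := calc
    F.natDegree < (C θ * (X ^ Fintype.card Fq - X)).natDegree :=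
      natDegree_lt_of_comp_eq_mul_derivative heq hTF (hT_natDegree ▸ hcard) hF
    _ ≤ (X ^ Fintype.card Fq - X : Fq[X]).natDegree := natDegree_C_mul_le _ _
    _ = Fintype.card Fq := FiniteField.X_pow_card_sub_X_natDegree_eq Fq Fintype.one_lt_card
  obtain ⟨a, ha⟩ := exists_eval_ne_zero_of_natDegree_lt_card _ hF'
    (by rw [Cardinal.mk_fintype]; exact_mod_cast (natDegree_derivative_lt hF.ne').trans hF_lt)
  refine ⟨hF', F.eval a, Finset.mem_image_of_mem _ (Finset.mem_univ a),
    mul_right_cancel₀ ha ?_⟩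
  rw [eval_derivative_mul_of_comp_eq_mul_derivative heq (by simp [FiniteField.pow_card]),
    derivative_C_mul, FiniteField.derivative_X_pow_card_sub_X]
  simp

theorem stmt_4 {Fq : Type*} [Field Fq] [Fintype Fq] [DecidableEq Fq]
    (q : ℕ) (hq : Fintype.card Fq = q)
    (F : Polynomial Fq) (hF : 0 < F.natDegree)
    (hcard : 2 ≤ (Finset.image (fun a => F.eval a) Finset.univ).card)
    (θ : Fq) (hθ : θ ≠ 0)
    (T : Polynomial Fq)
    (hT : T = ∏ γ ∈ Finset.image (fun a => F.eval a) Finset.univ,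
            (Polynomial.X - Polynomial.C γ))
    (heq : T.comp F = Polynomial.C θ * (Polynomial.X ^ q - Polynomial.X) *
      Polynomial.derivative F) :
    Polynomial.derivative F ≠ 0 ∧
    ∃ γ ∈ Finset.image (fun a => F.eval a) Finset.univ,
      (Polynomial.derivative T).eval γ = -θ :=
  stmt_4_general q hq F hF hcard θ T hT heq
end

section
/- Let F ∈ F_q[x] be nonconstant with |V_F| ≥ 2 and suppose T(F) = θ(x^q - x)F' for θ ∈ F_q*, T = ∏_{γ ∈ V_F}(x - γ). Then the second derivative F'' = 0 if and only if T' is a constant polynomial. -/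
open Polynomial

theorem stmt_5 {Fq : Type*} [Field Fq] [Fintype Fq] [DecidableEq Fq]
    (q : ℕ) (hq : Fintype.card Fq = q)
    (F : Polynomial Fq) (hF : 0 < F.natDegree)
    (hcard : 2 ≤ (Finset.image (fun a => F.eval a) Finset.univ).card)
    (θ : Fq) (hθ : θ ≠ 0)
    (T : Polynomial Fq)
    (hT : T = ∏ γ ∈ Finset.image (fun a => F.eval a) Finset.univ,
            (Polynomial.X - Polynomial.C γ))
    (heq : T.comp F = Polynomial.C θ * (Polynomial.X ^ q - Polynomial.X) *
      Polynomial.derivative F) :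
    Polynomial.derivative (Polynomial.derivative F) = 0 ↔
      ∃ c : Fq, Polynomial.derivative T = Polynomial.C c := by
  have hq2 : 2 ≤ q := by
    rw [← hq]; exact Fintype.one_lt_card
  have hcast : (q : Fq) = 0 := by
    subst hq; exact Nat.cast_card_eq_zero Fq
  set G : Polynomial Fq := X ^ q - X with hG
  have hGdeg : G.natDegree = q := by
    rw [hG]
    have : (X : Polynomial Fq).degree < (X ^ q : Polynomial Fq).degree := by
      rw [degree_X, degree_X_pow]
      exact_mod_cast hq2
    rw [natDegree_sub_eq_left_of_natDegree_lt, natDegree_X_pow]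
    rw [natDegree_X, natDegree_X_pow]; omega
  have hGne : G ≠ 0 := by
    intro h; rw [h, natDegree_zero] at hGdeg; omega
  have hG' : derivative G = -1 := by
    rw [hG, derivative_sub, derivative_X_pow, derivative_X, hcast]
    simp
  have hTmonic : T.Monic := by
    rw [hT]; exact monic_prod_of_monic _ _ (fun γ _ => monic_X_sub_C γ)
  have hTne : T ≠ 0 := hTmonic.ne_zero
  have hFne : ∀ a : Fq, F ≠ C a := by
    intro a h
    rw [h, natDegree_C] at hF; omega
  have hF' : derivative F ≠ 0 := by
    intro h
    rw [h, mul_zero] at heq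
    rcases comp_eq_zero_iff.mp heq with h1 | ⟨_, h2⟩
    · exact hTne h1
    · exact hFne _ h2
  have hTdeg : T.natDegree = (Finset.image (fun a => F.eval a) Finset.univ).card := by
    rw [hT, natDegree_prod _ _ (fun γ _ => X_sub_C_ne_zero γ)]
    simp
  have hCθG : C θ * G ≠ 0 := mul_ne_zero (by simpa using hθ) hGne
  have hCθGdeg : (C θ * G).natDegree = q := by rw [natDegree_C_mul hθ, hGdeg]
  have hdeg : T.natDegree * F.natDegree = q + (derivative F).natDegree := by
    have h1 : (T.comp F).natDegree = T.natDegree * F.natDegree := natDegree_comp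
    have h2 : (C θ * G * derivative F).natDegree = q + (derivative F).natDegree := by
      rw [natDegree_mul hCθG hF', hCθGdeg]
    rw [← h1, heq, h2]
  have hdFlt : (derivative F).natDegree < F.natDegree := natDegree_derivative_lt (by omega)
  have hFltq : F.natDegree < q := by
    have hm : 2 ≤ T.natDegree := by omega
    have := Nat.mul_le_mul_right F.natDegree hm
    omega
  -- differentiate the functional equation
  have hder : (derivative T).comp F * derivative F
      = C θ * (-derivative F + G * derivative (derivative F)) := by
    have h := congrArg derivative heq
    rw [derivative_comp] at h
    rw [mul_comm ((derivative T).comp F) (derivative F), h, mul_assoc, derivative_C_mul, derivative_mul, hG']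
    ring
  constructor
  · intro h2
    rw [h2, mul_zero, add_zero] at hder
    have hfac : ((derivative T).comp F + C θ) * derivative F = 0 := by
      linear_combination hder
    rcases mul_eq_zero.mp hfac with h | h
    · have hcomp : (derivative T).comp F = -C θ := by linear_combination h
      have hdeg0 : (derivative T).natDegree * F.natDegree = 0 := by
        rw [← natDegree_comp, hcomp]
        simp
      have : (derivative T).natDegree = 0 := by
        rcases Nat.mul_eq_zero.mp hdeg0 with h | h
        · exact h
        · omega
      obtain ⟨c, hc⟩ := natDegree_eq_zero.mp this
      exact ⟨c, hc.symm⟩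
    · exact absurd h hF'
  · rintro ⟨c, hc⟩
    by_contra hH
    rw [hc, C_comp] at hder
    have h1 : C θ * G * derivative (derivative F) = C (c + θ) * derivative F := by
      rw [C_add]; linear_combination -hder
    have hL : (C θ * G * derivative (derivative F)).natDegree
        = q + (derivative (derivative F)).natDegree := by
      rw [natDegree_mul hCθG hH, hCθGdeg]
    have hR : (C (c + θ) * derivative F).natDegree ≤ (derivative F).natDegree :=
      natDegree_C_mul_le _ _
    rw [h1, ] at hL
    omega
end

section
/- Let f(x) and g(y) be nonconstant polynomials over the algebraic closure of F_q such that the two-variable polynomial F(x,y) = f(x) - g(y) is not a polynomial in x^p and y^p (where p is the characteristic). Then in the factorization of F into irreducible factors, the irreducible factors are pairwise coprime (F is squarefree up to units). -/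
/-!
If `f' ≠ 0`, regard `F` as the polynomial `f(T) - g(X₁)` in `T` over `R = K[X₁]`. Its leading
coefficient is a unit of `K`, so it is squarefree as soon as it is squarefree over `Frac R`, where
it is even separable: a common root with its derivative `f'(T)` is a root of `f'`, hence (as `K`
is algebraically closed) an element `β ∈ K`, and then `g(X₁) = f(β)` would be constant. The case
`g' ≠ 0` is symmetric, and if `f' = g' = 0` then `f` and `g` are polynomials in `T ^ p`, so `F` is
a polynomial in `X₀ ^ p` and `X₁ ^ p`.
-/

open Polynomial MvPolynomial

theorem squarefree_map_iff {A B F : Type*} [Monoid A] [Monoid B] [EquivLike F A B]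
    [MulEquivClass F A B] (e : F) {a : A} : Squarefree (e a) ↔ Squarefree a := by
  refine ⟨fun h x hx => ?_, fun h y hy => ?_⟩
  · exact (isUnit_map_iff e x).mp (h (e x) (by rwa [← map_mul, map_dvd_iff]))
  · obtain ⟨x, rfl⟩ := EquivLike.surjective e y
    exact (isUnit_map_iff e x).mpr (h x (by rwa [← map_mul, map_dvd_iff] at hy))

theorem Polynomial.squarefree_of_squarefree_map {R S : Type*} [CommRing R] [CommRing S]
    [IsDomain S] {ψ : R →+* S} (hψ : Function.Injective ψ) {P : R[X]}
    (hP : IsUnit P.leadingCoeff) (h : Squarefree (P.map ψ)) : Squarefree P := by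
  intro q hq
  have hq0 : q.natDegree = 0 := by
    rw [← natDegree_map_eq_of_injective hψ]
    refine natDegree_eq_zero_of_isUnit (h _ ?_)
    simpa only [Polynomial.map_mul] using Polynomial.map_dvd ψ hq
  have hqP : C (q.coeff 0) ∣ P := by
    rw [← eq_C_of_natDegree_eq_zero hq0]
    exact (dvd_mul_right q q).trans hq
  rw [eq_C_of_natDegree_eq_zero hq0, isUnit_C]
  exact isUnit_of_dvd_unit ((C_dvd_iff_dvd_coeff _ _).mp hqP _) hP

theorem Polynomial.separable_map_sub_C {K L : Type*} [Field K] [IsAlgClosed K] [Field L]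
    [Algebra K L] {f : K[X]} (hf : derivative f ≠ 0) {c : L}
    (hc : c ∉ Set.range (algebraMap K L)) :
    (f.map (algebraMap K L) - Polynomial.C c).Separable := by
  rw [separable_def, derivative_sub, derivative_C, sub_zero, derivative_map]
  refine (isCoprime_iff_aeval_ne_zero_of_isAlgClosed (k := L) (AlgebraicClosure L) _ _).mpr
    fun a => ?_
  by_contra! ⟨hQ, hQ'⟩
  obtain ⟨β, rfl⟩ : a ∈ (algebraMap K (AlgebraicClosure L)).range :=
    (IsAlgClosed.splits _).mem_range_of_isRoot hf (by simpa [eval_map_algebraMap] using hQ')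
  refine hc ⟨f.eval β, (algebraMap L (AlgebraicClosure L)).injective ?_⟩
  simp only [map_sub, aeval_C, aeval_map_algebraMap, aeval_algebraMap_apply, sub_eq_zero] at hQ
  rwa [← IsScalarTower.algebraMap_apply, ← coe_aeval_eq_eval]

theorem MvPolynomial.finSuccEquiv_aeval_X_zero {R : Type*} [CommSemiring R] {n : ℕ} (f : R[X]) :
    finSuccEquiv R n (Polynomial.aeval (X 0) f) = f.map MvPolynomial.C := by
  rw [← Polynomial.aeval_algHom_apply, finSuccEquiv_X_zero, aeval_X_left_eq_map]
  rfl

theorem MvPolynomial.finSuccEquiv_aeval_X_succ {R : Type*} [CommSemiring R] {n : ℕ} (f : R[X])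
    (j : Fin n) :
    finSuccEquiv R n (Polynomial.aeval (X j.succ) f) = Polynomial.C (Polynomial.aeval (X j) f) := by
  rw [← Polynomial.aeval_algHom_apply, finSuccEquiv_X_succ]
  exact Polynomial.aeval_algHom_apply
    ((CAlgHom : MvPolynomial (Fin n) R →ₐ[MvPolynomial (Fin n) R] _).restrictScalars R) _ _

theorem MvPolynomial.aeval_X_notMem_range_C {σ R : Type*} [CommSemiring R] {g : R[X]}
    (hg : 0 < g.natDegree) (i : σ) :
    Polynomial.aeval (X i) g ∉ Set.range (MvPolynomial.C : R → MvPolynomial σ R) := by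
  rintro ⟨k, hk⟩
  have hgk := congrArg (MvPolynomial.aeval fun _ => (Polynomial.X : R[X])) hk
  rw [MvPolynomial.aeval_C, ← Polynomial.aeval_algHom_apply, MvPolynomial.aeval_X,
    Polynomial.aeval_X_left_apply] at hgk
  rw [← hgk, Polynomial.algebraMap_eq, natDegree_C] at hg
  exact hg.false

theorem squarefree_aeval_X_zero_sub_aeval_X_one_of_derivative_ne_zero_left {K : Type*} [Field K]
    [IsAlgClosed K] {f g : K[X]} (hf : derivative f ≠ 0) (hg : 0 < g.natDegree) :
    Squarefree (Polynomial.aeval (X 0) f - Polynomial.aeval (X 1) g : MvPolynomial (Fin 2) K) := by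
  set R := MvPolynomial (Fin 1) K
  set r : R := Polynomial.aeval (X 0) g
  have hP : finSuccEquiv K 1 (Polynomial.aeval (X 0) f - Polynomial.aeval (X 1) g) =
      f.map MvPolynomial.C - Polynomial.C r := by
    rw [map_sub, finSuccEquiv_aeval_X_zero, ← finSuccEquiv_aeval_X_succ]
    rfl
  have hdeg : 0 < f.degree := by
    contrapose! hf
    exact derivative_of_natDegree_zero (natDegree_eq_zero_iff_degree_le_zero.mpr hf)
  have hr : algebraMap R (FractionRing R) r ∉ Set.range (algebraMap K (FractionRing R)) := by
    rintro ⟨k, hk⟩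
    rw [IsScalarTower.algebraMap_apply K R] at hk
    exact aeval_X_notMem_range_C hg 0 ⟨k, IsFractionRing.injective R _ hk⟩
  rw [← squarefree_map_iff (finSuccEquiv K 1), hP]
  refine squarefree_of_squarefree_map (IsFractionRing.injective R (FractionRing R)) ?_ ?_
  · rw [leadingCoeff_sub_of_degree_lt, leadingCoeff_map_of_injective (C_injective _ _)]
    · exact (leadingCoeff_ne_zero.mpr (ne_zero_of_degree_gt hdeg)).isUnit.map _
    · rw [degree_map_eq_of_injective (C_injective _ _)]
      exact degree_C_le.trans_lt hdeg
  · rw [Polynomial.map_sub, Polynomial.map_map, Polynomial.map_C]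
    exact (separable_map_sub_C hf hr).squarefree

theorem squarefree_aeval_X_zero_sub_aeval_X_one_of_derivative_ne_zero_right {K : Type*} [Field K]
    [IsAlgClosed K] {f g : K[X]} (hf : 0 < f.natDegree) (hg : derivative g ≠ 0) :
    Squarefree (Polynomial.aeval (X 0) f - Polynomial.aeval (X 1) g : MvPolynomial (Fin 2) K) := by
  have hswap := squarefree_aeval_X_zero_sub_aeval_X_one_of_derivative_ne_zero_left hg hf
  set e := renameEquiv K (Equiv.swap (0 : Fin 2) 1)
  have he : e (Polynomial.aeval (X 0) g - Polynomial.aeval (X 1) f) =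
      -(Polynomial.aeval (X 0) f - Polynomial.aeval (X 1) g) := by
    simp [e, ← Polynomial.aeval_algHom_apply]
  rwa [← squarefree_map_iff e, he,
    (Associated.refl _).neg_left.squarefree_iff] at hswap

theorem MvPolynomial.aeval_X_pow_aeval_X_contract {σ R : Type*} [CommSemiring R]
    [NoZeroDivisors R] (p : ℕ) [ExpChar R p] {h : R[X]} (hh : derivative h = 0) (i : σ) :
    MvPolynomial.aeval (fun j => (X j ^ p : MvPolynomial σ R))
      (Polynomial.aeval (X i : MvPolynomial σ R) (Polynomial.contract p h)) =
      Polynomial.aeval (X i) h := by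
  rw [← Polynomial.aeval_algHom_apply, MvPolynomial.aeval_X, ← expand_aeval, expand_contract' p hh]

theorem stmt_6_general {Fq : Type*} [Field Fq]
    (p : ℕ) [Fact p.Prime] [CharP Fq p]
    (f g : Polynomial (AlgebraicClosure Fq))
    (hf : 0 < f.natDegree) (hg : 0 < g.natDegree)
    (F : MvPolynomial (Fin 2) (AlgebraicClosure Fq))
    (hF : F = Polynomial.aeval (MvPolynomial.X 0) f - Polynomial.aeval (MvPolynomial.X 1) g)
    (hnp : ¬ ∃ G : MvPolynomial (Fin 2) (AlgebraicClosure Fq),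
      F = MvPolynomial.aeval (fun i => MvPolynomial.X i ^ p) G) :
    Squarefree F := by
  subst hF
  by_cases hfd : derivative f = 0
  · by_cases hgd : derivative g = 0
    · refine absurd ⟨Polynomial.aeval (X 0) (contract p f) - Polynomial.aeval (X 1) (contract p g),
        ?_⟩ hnp
      rw [map_sub, aeval_X_pow_aeval_X_contract p hfd, aeval_X_pow_aeval_X_contract p hgd]
    · exact squarefree_aeval_X_zero_sub_aeval_X_one_of_derivative_ne_zero_right hf hgd
  · exact squarefree_aeval_X_zero_sub_aeval_X_one_of_derivative_ne_zero_left hfd hg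

theorem stmt_6 {Fq : Type*} [Field Fq] [Fintype Fq]
    (p : ℕ) [Fact p.Prime] [CharP Fq p]
    (f g : Polynomial (AlgebraicClosure Fq))
    (hf : 0 < f.natDegree) (hg : 0 < g.natDegree)
    (F : MvPolynomial (Fin 2) (AlgebraicClosure Fq))
    (hF : F = Polynomial.aeval (MvPolynomial.X 0) f - Polynomial.aeval (MvPolynomial.X 1) g)
    (hnp : ¬ ∃ G : MvPolynomial (Fin 2) (AlgebraicClosure Fq),
      F = MvPolynomial.aeval (fun i => MvPolynomial.X i ^ p) G) :
    Squarefree F :=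
  stmt_6_general p f g hf hg F hF hnp
end

section
/- Let F(x,y) ∈ K[x,y] be nonconstant over an algebraically closed field K containing F_q, with F = ∏_{i=1}^r F_i where the F_i are irreducible and pairwise coprime. Then F divides (x^q - x)∂F/∂x + (y^q - y)∂F/∂y if and only if, for every i, F_i divides (x^q - x)∂F_i/∂x + (y^q - y)∂F_i/∂y. -/
/-!
The operator `G ↦ (x^q - x) ∂G/∂x + (y^q - y) ∂G/∂y` is a derivation `D`, so by the Leibniz rule
`D(∏ Fᵢ) = ∑ᵢ (∏_{j ≠ i} Fⱼ) D(Fᵢ)`; this gives the implication from the factors to the product.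
Conversely, writing `F = Fᵢ · G` with `G = ∏_{j ≠ i} Fⱼ`, the relation `Fᵢ ∣ D(F) = G D(Fᵢ) + Fᵢ D(G)`
gives `Fᵢ ∣ G D(Fᵢ)`, and `Fᵢ` is prime and divides no factor of `G`, hence `Fᵢ ∣ D(Fᵢ)`.
-/

open MvPolynomial

namespace Derivation

variable {R A M : Type*} [CommSemiring R] [CommSemiring A] [AddCommMonoid M] [Algebra R A]
  [Module A M] [Module R M]

theorem leibniz_prod (D : Derivation R A M) {ι : Type*} [DecidableEq ι] (s : Finset ι)
    (f : ι → A) : D (∏ i ∈ s, f i) = ∑ i ∈ s, (∏ j ∈ s.erase i, f j) • D (f i) := by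
  induction s using Finset.induction_on with
  | empty => simp
  | insert a s ha ih =>
    rw [Finset.prod_insert ha, leibniz, ih, Finset.sum_insert ha, Finset.erase_insert ha,
      Finset.smul_sum, add_comm]
    congr 1
    refine Finset.sum_congr rfl fun i hi => ?_
    rw [Finset.erase_insert_of_ne (ne_of_mem_of_not_mem hi ha).symm,
      Finset.prod_insert fun h => ha (Finset.mem_of_mem_erase h), smul_smul]

end Derivation

theorem prod_dvd_derivation_prod_iff {R A : Type*} [CommSemiring R] [CommRing A] [Algebra R A]
    (D : Derivation R A A) {ι : Type*} [Fintype ι] [DecidableEq ι] (p : ι → A)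
    (hp : ∀ i, Prime (p i)) (hcop : ∀ i j, i ≠ j → ¬ p i ∣ p j) :
    ∏ i, p i ∣ D (∏ i, p i) ↔ ∀ i, p i ∣ D (p i) := by
  constructor
  · intro h i
    have hprod : p i * ∏ j ∈ Finset.univ.erase i, p j = ∏ j, p j :=
      Finset.mul_prod_erase _ _ (Finset.mem_univ i)
    have hdvd : p i ∣ (∏ j ∈ Finset.univ.erase i, p j) * D (p i) := by
      have hD : p i ∣ D (∏ j, p j) := (Finset.dvd_prod_of_mem p (Finset.mem_univ i)).trans h
      rw [← hprod, D.leibniz, smul_eq_mul, smul_eq_mul] at hD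
      exact (dvd_add_right (dvd_mul_right _ _)).mp hD
    refine ((hp i).dvd_or_dvd hdvd).resolve_left fun hi => ?_
    obtain ⟨j, hj, hij⟩ := ((hp i).dvd_finsetProd_iff p).mp hi
    exact hcop i j (Finset.ne_of_mem_erase hj).symm hij
  · intro h
    rw [D.leibniz_prod]
    refine Finset.dvd_sum fun i _ => ?_
    rw [← Finset.prod_erase_mul _ _ (Finset.mem_univ i), smul_eq_mul]
    exact mul_dvd_mul_left _ (h i)

namespace MvPolynomial

variable {σ K : Type*} [Fintype σ] [CommRing K]

noncomputable def artinSchreierDerivation (q : ℕ) :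
    Derivation K (MvPolynomial σ K) (MvPolynomial σ K) :=
  ∑ k : σ, (X k ^ q - X k : MvPolynomial σ K) • pderiv k

theorem artinSchreierDerivation_apply (q : ℕ) (G : MvPolynomial σ K) :
    artinSchreierDerivation q G = ∑ k, (X k ^ q - X k) * pderiv k G := by
  rw [artinSchreierDerivation, ← Derivation.coeFnAddMonoidHom_apply, map_sum, Finset.sum_apply]
  rfl

end MvPolynomial

theorem stmt_7_general {K : Type*} [Field K]
    (q : ℕ)
    (r : ℕ) (Fi : Fin r → MvPolynomial (Fin 2) K)
    (hIrr : ∀ i, Irreducible (Fi i))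
    (hcop : ∀ i j, i ≠ j → ¬ (Fi i ∣ Fi j))
    (F : MvPolynomial (Fin 2) K) (hF : F = ∏ i, Fi i) :
    (F ∣ (MvPolynomial.X 0 ^ q - MvPolynomial.X 0) * MvPolynomial.pderiv 0 F +
         (MvPolynomial.X 1 ^ q - MvPolynomial.X 1) * MvPolynomial.pderiv 1 F) ↔
    ∀ i, Fi i ∣ (MvPolynomial.X 0 ^ q - MvPolynomial.X 0) * MvPolynomial.pderiv 0 (Fi i) +
         (MvPolynomial.X 1 ^ q - MvPolynomial.X 1) * MvPolynomial.pderiv 1 (Fi i) := by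
  have hD (G : MvPolynomial (Fin 2) K) :
      (X 0 ^ q - X 0) * pderiv 0 G + (X 1 ^ q - X 1) * pderiv 1 G =
        artinSchreierDerivation q G := by
    rw [artinSchreierDerivation_apply, Fin.sum_univ_two]
  simp only [hD, hF]
  exact prod_dvd_derivation_prod_iff _ Fi (fun i => (hIrr i).prime) hcop

theorem stmt_7 {Fq K : Type*} [Field Fq] [Fintype Fq] [Field K] [IsAlgClosed K]
    [Algebra Fq K] (q : ℕ) (hq : Fintype.card Fq = q)
    (r : ℕ) (hr : 0 < r) (Fi : Fin r → MvPolynomial (Fin 2) K)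
    (hIrr : ∀ i, Irreducible (Fi i))
    (hcop : ∀ i j, i ≠ j → ¬ (Fi i ∣ Fi j))
    (F : MvPolynomial (Fin 2) K) (hF : F = ∏ i, Fi i) :
    (F ∣ (MvPolynomial.X 0 ^ q - MvPolynomial.X 0) * MvPolynomial.pderiv 0 F +
         (MvPolynomial.X 1 ^ q - MvPolynomial.X 1) * MvPolynomial.pderiv 1 F) ↔
    ∀ i, Fi i ∣ (MvPolynomial.X 0 ^ q - MvPolynomial.X 0) * MvPolynomial.pderiv 0 (Fi i) +
         (MvPolynomial.X 1 ^ q - MvPolynomial.X 1) * MvPolynomial.pderiv 1 (Fi i) :=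
  stmt_7_general q r Fi hIrr hcop F hF
end

section
/- Suppose f(x) - g(y) divides (x^q - x)f'(x) - (y^q - y)g'(y) in F_q[x,y], where f, g ∈ F_q[x] are nonconstant and f(x) - g(y) ∉ F_q[x^p, y^p]. Then there exist a monic polynomial T ∈ F_q[x] and θ ∈ F_q* such that T(f(x)) = θ(x^q - x)f'(x) and T(g(y)) = θ(y^q - y)g'(y). -/
/-!
By the Fried–MacRae theorem the divisibility yields `T₀` with `T₀ ∘ f = (x^q - x) f'` and
`T₀ ∘ g = (y^q - y) g'`; then `T = T₀ / lc(T₀)` and `θ = lc(T₀)⁻¹`. Here `T₀ ≠ 0`, since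
otherwise `f' = g' = 0` (as `x^q - x ≠ 0`), and in characteristic `p` this puts `f(x) - g(y)`
in `F_q[x^p, y^p]`.

For Fried–MacRae itself, reduce `b(y)` modulo `x - g(y)` (monic in `y` up to a unit) to some
`E(x, y)` of `y`-degree `< deg g`. Substituting `x ↦ f(x)` gives
`E(f(x), y) ≡ b(y) ≡ a(x)` modulo `f(x) - g(y)`, and comparing `y`-degrees gives
`E(f(x), y) = a(x)`. As `x ↦ f(x)` is injective, `E = T(x)` does not involve `y`, and
substituting `x ↦ g(y)` gives `b = T ∘ g`.
-/

open Polynomial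

namespace Polynomial

@[simp]
theorem compRingHom_comp_C {R : Type*} [CommSemiring R] (f : R[X]) :
    (compRingHom f).comp C = C :=
  RingHom.ext fun _ => C_comp

theorem compRingHom_injective {R : Type*} [CommRing R] [NoZeroDivisors R] {f : R[X]}
    (hf : 0 < f.natDegree) : Function.Injective (compRingHom f) := by
  refine (injective_iff_map_eq_zero _).mpr fun p hp => ?_
  rw [coe_compRingHom_apply, comp_eq_zero_iff] at hp
  refine hp.resolve_right fun ⟨_, hfC⟩ => ?_
  rw [hfC, natDegree_C] at hf
  exact hf.false

/-! In `R[X][X]` the inner variable plays the role of `x` and the outer one of `y`: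
`C f` is `f(x)` and `g.map C` is `g(y)`, matching `Bivariate.equivMvPolynomial`. -/

theorem degree_C_sub_map_C {R : Type*} [Ring R] (f : R[X]) {g : R[X]} (hg : 0 < g.degree) :
    (C f - g.map C).degree = g.degree := by
  rw [degree_sub_eq_right_of_degree_lt] <;>
    rw [degree_map_eq_of_injective C_injective]
  exact degree_C_le.trans_lt hg

section Field

variable {K : Type*} [Field K]

theorem exists_degree_lt_and_C_X_sub_map_C_dvd {g : K[X]} (hg : 0 < g.degree) (b : K[X]) :
    ∃ E : K[X][X], E.degree < g.degree ∧ C X - g.map C ∣ b.map C - E := by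
  set F : K[X][X] := C X - g.map C
  have hF : IsUnit F.leadingCoeff := by
    rw [leadingCoeff_sub_of_degree_lt', leadingCoeff_map_of_injective C_injective, IsUnit.neg_iff,
      isUnit_C, isUnit_iff_ne_zero, leadingCoeff_ne_zero]
    · rintro rfl
      simp at hg
    · rw [degree_map_eq_of_injective C_injective]
      exact degree_C_le.trans_lt hg
  obtain ⟨u, hu⟩ := hF
  set M : K[X][X] := C ((u⁻¹ : K[X]ˣ) : K[X]) * F
  have hM : M.Monic := by
    rw [Monic, leadingCoeff_mul, leadingCoeff_C, ← hu, Units.inv_mul]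
  have hMdeg : M.degree = g.degree := by
    rw [degree_C_mul (Units.ne_zero _), degree_C_sub_map_C X hg]
  refine ⟨b.map C %ₘ M, hMdeg ▸ degree_modByMonic_lt _ hM, ?_⟩
  rw [modByMonic_eq_sub_mul_div, sub_sub_cancel]
  exact (dvd_mul_left F _).mul_right _

theorem exists_comp_eq_of_C_sub_map_C_dvd {f g a b : K[X]} (hf : 0 < f.natDegree)
    (hg : 0 < g.natDegree) (h : C f - g.map C ∣ C a - b.map C) :
    ∃ T : K[X], T.comp f = a ∧ T.comp g = b := by
  have hg' : 0 < g.degree := natDegree_pos_iff_degree_pos.mp hg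
  obtain ⟨E, hEdeg, hE⟩ := exists_degree_lt_and_C_X_sub_map_C_dvd hg' b
  have hEf : C f - g.map C ∣ b.map C - E.map (compRingHom f) := by
    simpa [Polynomial.map_map] using Polynomial.map_dvd (compRingHom f) hE
  have hEa : E.map (compRingHom f) = C a := by
    refine (sub_eq_zero.mp (eq_zero_of_dvd_of_degree_lt (p := C f - g.map C) ?_ ?_)).symm
    · simpa using dvd_add h hEf
    · rw [degree_C_sub_map_C f hg']
      exact (degree_sub_le _ _).trans_lt
        (max_lt (degree_C_le.trans_lt hg') (degree_map_le.trans_lt hEdeg))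
  have hEC : E = C (E.coeff 0) := eq_C_of_natDegree_eq_zero <| by
    rw [← natDegree_map_eq_of_injective (compRingHom_injective hf), hEa, natDegree_C]
  refine ⟨E.coeff 0, ?_, ?_⟩
  · rwa [hEC, Polynomial.map_C, C_inj, coe_compRingHom_apply] at hEa
  · have hψ := _root_.map_dvd (eval₂RingHom (compRingHom g) X) hE
    rw [hEC] at hψ
    simp only [coe_eval₂RingHom, eval₂_map, compRingHom_comp_C, eval₂_C_X, map_sub, eval₂_C,
      coe_compRingHom_apply, X_comp, sub_self, zero_dvd_iff, sub_eq_zero] at hψ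
    exact hψ.symm

end Field

theorem Bivariate.equivMvPolynomial_symm_aeval_X_zero {R : Type*} [CommSemiring R] (p : R[X]) :
    (Bivariate.equivMvPolynomial R).symm (aeval (MvPolynomial.X 0) p) = C p := by
  rw [← aeval_algHom_apply, Bivariate.equivMvPolynomial_symm_X_0]
  exact (aeval_algHom_apply (CAlgHom (R := R)) X p).trans (congrArg C (aeval_X_left_apply p))

theorem Bivariate.equivMvPolynomial_symm_aeval_X_one {R : Type*} [CommSemiring R] (p : R[X]) :
    (Bivariate.equivMvPolynomial R).symm (aeval (MvPolynomial.X 1) p) = p.map C := by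
  rw [← aeval_algHom_apply, Bivariate.equivMvPolynomial_symm_X_1, aeval_X_left_eq_map,
    algebraMap_eq]

theorem exists_comp_eq_of_sub_dvd_sub {K : Type*} [Field K] {f g a b : K[X]}
    (hf : 0 < f.natDegree) (hg : 0 < g.natDegree)
    (h : (aeval (MvPolynomial.X 0) f - aeval (MvPolynomial.X 1) g : MvPolynomial (Fin 2) K) ∣
      aeval (MvPolynomial.X 0) a - aeval (MvPolynomial.X 1) b) :
    ∃ T : K[X], T.comp f = a ∧ T.comp g = b := by
  refine exists_comp_eq_of_C_sub_map_C_dvd hf hg ?_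
  simpa only [map_sub, Bivariate.equivMvPolynomial_symm_aeval_X_zero,
    Bivariate.equivMvPolynomial_symm_aeval_X_one] using
    _root_.map_dvd (Bivariate.equivMvPolynomial K).symm h

theorem aeval_X_eq_aeval_X_pow_of_derivative_eq_zero {R σ : Type*} [CommRing R]
    [NoZeroDivisors R] {p : ℕ} [CharP R p] (hp : p ≠ 0) {h : R[X]} (hh : derivative h = 0)
    (i : σ) :
    aeval (MvPolynomial.X i : MvPolynomial σ R) h =
      MvPolynomial.aeval (fun j => MvPolynomial.X j ^ p)
        (aeval (MvPolynomial.X i : MvPolynomial σ R) (contract p h)) := by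
  rw [← aeval_algHom_apply, MvPolynomial.aeval_X, ← expand_aeval, expand_contract p hh hp]

end Polynomial

open MvPolynomial in
theorem stmt_9_general {Fq : Type*} [Field Fq] [Fintype Fq]
    (p q : ℕ) [CharP Fq p] (hq : Fintype.card Fq = q)
    (f g : Polynomial Fq) (hf : 0 < f.natDegree) (hg : 0 < g.natDegree)
    (hnp : ¬ ∃ G : MvPolynomial (Fin 2) Fq,
      (Polynomial.aeval (MvPolynomial.X 0) f - Polynomial.aeval (MvPolynomial.X 1) g
          : MvPolynomial (Fin 2) Fq) =
        MvPolynomial.aeval (fun i => MvPolynomial.X i ^ p) G)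
    (hdvd : (Polynomial.aeval (MvPolynomial.X 0) f - Polynomial.aeval (MvPolynomial.X 1) g
          : MvPolynomial (Fin 2) Fq) ∣
      ((MvPolynomial.X 0 ^ q - MvPolynomial.X 0) *
          Polynomial.aeval (MvPolynomial.X 0) (Polynomial.derivative f) -
        (MvPolynomial.X 1 ^ q - MvPolynomial.X 1) *
          Polynomial.aeval (MvPolynomial.X 1) (Polynomial.derivative g))) :
    ∃ (T : Polynomial Fq) (θ : Fq), T.Monic ∧ θ ≠ 0 ∧
      T.comp f = Polynomial.C θ * (Polynomial.X ^ q - Polynomial.X) *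
        Polynomial.derivative f ∧
      T.comp g = Polynomial.C θ * (Polynomial.X ^ q - Polynomial.X) *
        Polynomial.derivative g := by
  have hp : p ≠ 0 := CharP.char_ne_zero_of_finite Fq p
  have hXq : (Polynomial.X ^ q - Polynomial.X : Fq[X]) ≠ 0 :=
    hq ▸ FiniteField.X_pow_card_sub_X_ne_zero Fq Fintype.one_lt_card
  obtain ⟨T, hTf, hTg⟩ := exists_comp_eq_of_sub_dvd_sub hf hg
    (a := (Polynomial.X ^ q - Polynomial.X) * derivative f)
    (b := (Polynomial.X ^ q - Polynomial.X) * derivative g) (by simpa using hdvd)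
  have hT : T ≠ 0 := by
    rintro rfl
    simp only [zero_comp, zero_eq_mul, hXq, false_or] at hTf hTg
    refine hnp ⟨Polynomial.aeval (X 0) (contract p f) - Polynomial.aeval (X 1) (contract p g), ?_⟩
    rw [aeval_X_eq_aeval_X_pow_of_derivative_eq_zero hp hTf,
      aeval_X_eq_aeval_X_pow_of_derivative_eq_zero hp hTg, ← map_sub]
  refine ⟨T * Polynomial.C T.leadingCoeff⁻¹, T.leadingCoeff⁻¹, monic_mul_leadingCoeff_inv hT,
    inv_ne_zero (leadingCoeff_ne_zero.mpr hT), ?_, ?_⟩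
  · rw [mul_comp, C_comp, hTf]; ring
  · rw [mul_comp, C_comp, hTg]; ring

theorem stmt_9 {Fq : Type*} [Field Fq] [Fintype Fq]
    (p q : ℕ) [Fact p.Prime] [CharP Fq p] (hq : Fintype.card Fq = q)
    (f g : Polynomial Fq) (hf : 0 < f.natDegree) (hg : 0 < g.natDegree)
    (hnp : ¬ ∃ G : MvPolynomial (Fin 2) Fq,
      (Polynomial.aeval (MvPolynomial.X 0) f - Polynomial.aeval (MvPolynomial.X 1) g
          : MvPolynomial (Fin 2) Fq) =
        MvPolynomial.aeval (fun i => MvPolynomial.X i ^ p) G)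
    (hdvd : (Polynomial.aeval (MvPolynomial.X 0) f - Polynomial.aeval (MvPolynomial.X 1) g
          : MvPolynomial (Fin 2) Fq) ∣
      ((MvPolynomial.X 0 ^ q - MvPolynomial.X 0) *
          Polynomial.aeval (MvPolynomial.X 0) (Polynomial.derivative f) -
        (MvPolynomial.X 1 ^ q - MvPolynomial.X 1) *
          Polynomial.aeval (MvPolynomial.X 1) (Polynomial.derivative g))) :
    ∃ (T : Polynomial Fq) (θ : Fq), T.Monic ∧ θ ≠ 0 ∧
      T.comp f = Polynomial.C θ * (Polynomial.X ^ q - Polynomial.X) *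
        Polynomial.derivative f ∧
      T.comp g = Polynomial.C θ * (Polynomial.X ^ q - Polynomial.X) *
        Polynomial.derivative g :=
  stmt_9_general p q hq f g hf hg hnp hdvd
end

section
/- (Fried–MacRae) Let K be a field and f, g, a, b ∈ K[x] nonconstant polynomials. Then f(x) - g(y) divides a(x) - b(y) in K[x,y] if and only if there exists a polynomial T ∈ K[x] such that T(f(x)) = a(x) and T(g(y)) = b(y). -/
/-!
Read `f(x) - g(y)` as the polynomial `f(X) - t` of `K[t][X]`, specialised at `t := g(y)`. Its
leading coefficient is a unit, so `a(X) ≡ R(t, X)` modulo `f(X) - t` with `deg_X R < deg f`, and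
this congruence survives every specialisation `t := s`. At `t := g(y)`, divisibility of
`a(x) - b(y)` forces `R(g(y), X) = b(y)` by degrees; since composition with a nonconstant `g` is
injective, `R` is a constant `T(t)` with `T ∘ g = b`. At `t := f(X)` the modulus vanishes, which
gives `a = T ∘ f`.
-/

open Polynomial

namespace Polynomial

theorem exists_degree_lt_dvd_sub_of_isUnit_leadingCoeff {R : Type*} [CommRing R] [Nontrivial R]
    {p : R[X]} (hp : IsUnit p.leadingCoeff) (q : R[X]) :
    ∃ r : R[X], r.degree < p.degree ∧ p ∣ q - r := by
  obtain ⟨u, hu⟩ := hp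
  have hmonic : (C (↑u⁻¹ : R) * p).Monic :=
    monic_C_mul_of_mul_leadingCoeff_eq_one (hu ▸ u.inv_mul)
  refine ⟨q %ₘ (C (↑u⁻¹ : R) * p), ?_, ?_⟩
  · simpa only [degree_C_mul_of_isUnit u⁻¹.isUnit] using degree_modByMonic_lt q hmonic
  · rw [modByMonic_eq_sub_mul_div, sub_sub_cancel]
    exact (dvd_mul_left p _).mul_right _

theorem sub_dvd_aeval_sub {R A : Type*} [CommRing R] [CommRing A] [Algebra R A] (x y : A)
    (p : R[X]) : x - y ∣ aeval x p - aeval y p := by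
  simpa only [aeval_def, eval_map] using sub_dvd_eval_sub x y (p.map (algebraMap R A))

theorem compRingHom_injective_s10 {R : Type*} [CommRing R] [IsDomain R] {g : R[X]}
    (hg : 0 < g.natDegree) : Function.Injective (compRingHom g) := by
  refine (injective_iff_map_eq_zero _).mpr fun p hp => ?_
  rcases comp_eq_zero_iff.mp hp with h | ⟨_, hC⟩
  · exact h
  · exact absurd (hC ▸ natDegree_C _ : g.natDegree = 0) hg.ne'

theorem map_map_C_compRingHom {R : Type*} [CommSemiring R] (p s : R[X]) :
    (p.map C).map (compRingHom s) = p.map C := by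
  rw [map_map]
  congr 1
  ext
  all_goals simp

theorem eval_X_map_C {R : Type*} [CommSemiring R] (p : R[X]) : (p.map C).eval X = p := by
  simp [eval_map]

end Polynomial

section FriedMacRae

variable {K : Type*} [Field K]

theorem isUnit_leadingCoeff_map_C_sub_C {f : K[X]} (hf : 0 < f.natDegree) (s : K[X]) :
    IsUnit (f.map C - C s).leadingCoeff := by
  have hlt : (C s).degree < (f.map C).degree := by
    rw [degree_map]
    exact degree_C_le.trans_lt (natDegree_pos_iff_degree_pos.mp hf)
  rw [leadingCoeff_sub_of_degree_lt hlt, leadingCoeff_map, isUnit_C, isUnit_iff_ne_zero,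
    leadingCoeff_ne_zero]
  rintro rfl
  simp at hf

theorem exists_remainder_map_C_sub_C {f : K[X]} (hf : 0 < f.natDegree) (a : K[X]) :
    ∃ R : K[X][X], R.natDegree < f.natDegree ∧
      ∀ s : K[X], f.map C - C s ∣ a.map C - R.map (compRingHom s) := by
  obtain ⟨R, hdeg, hdvd⟩ :=
    exists_degree_lt_dvd_sub_of_isUnit_leadingCoeff (isUnit_leadingCoeff_map_C_sub_C hf X) (a.map C)
  refine ⟨R, ?_, fun s => ?_⟩
  · rcases eq_or_ne R 0 with rfl | hR
    · simpa using hf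
    · simpa [natDegree_map] using natDegree_lt_natDegree hR hdeg
  · simpa [map_map_C_compRingHom] using map_dvd (mapRingHom (compRingHom s)) hdvd

theorem exists_comp_eq_of_map_C_sub_C_dvd {f g a b : K[X]} (hf : 0 < f.natDegree)
    (hg : 0 < g.natDegree) (h : f.map C - C g ∣ a.map C - C b) :
    ∃ T : K[X], T.comp f = a ∧ T.comp g = b := by
  obtain ⟨R, hRdeg, hR⟩ := exists_remainder_map_C_sub_C hf a
  have hRg : R.map (compRingHom g) = C b := by
    refine sub_eq_zero.mp (eq_zero_of_dvd_of_natDegree_lt (p := f.map C - C g) ?_ ?_)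
    · simpa using dvd_sub h (hR g)
    · simpa [natDegree_map] using natDegree_map_le.trans_lt hRdeg
  have hRconst : R = C (R.coeff 0) := by
    refine eq_C_of_natDegree_eq_zero ?_
    rw [← natDegree_map_eq_of_injective (compRingHom_injective_s10 hg), hRg, natDegree_C]
  refine ⟨R.coeff 0, ?_, ?_⟩
  · have hRf := map_dvd (evalRingHom X) (hR f)
    rw [hRconst] at hRf
    simp only [coe_evalRingHom, eval_sub, eval_X_map_C, eval_C, sub_self, map_C, coe_compRingHom,
      zero_dvd_iff] at hRf
    exact (sub_eq_zero.mp hRf).symm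
  · rw [hRconst] at hRg
    simpa using hRg

theorem aeval_vecCons_aeval_X_zero (p : K[X]) :
    MvPolynomial.aeval (![X, C X] : Fin 2 → K[X][X])
      (aeval (MvPolynomial.X 0 : MvPolynomial (Fin 2) K) p) = p.map C := by
  rw [← aeval_algHom_apply, MvPolynomial.aeval_X]
  rfl

theorem aeval_vecCons_aeval_X_one (p : K[X]) :
    MvPolynomial.aeval (![X, C X] : Fin 2 → K[X][X])
      (aeval (MvPolynomial.X 1 : MvPolynomial (Fin 2) K) p) = C p := by
  rw [← aeval_algHom_apply, MvPolynomial.aeval_X]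
  simpa using aeval_algHom_apply (CAlgHom (R := K) (A := K[X])) X p

end FriedMacRae

open Polynomial MvPolynomial

theorem stmt_10_general {K : Type*} [Field K]
    (f g a b : Polynomial K)
    (hf : 0 < f.natDegree) (hg : 0 < g.natDegree) :
    ((Polynomial.aeval (MvPolynomial.X 0) f - Polynomial.aeval (MvPolynomial.X 1) g
        : MvPolynomial (Fin 2) K) ∣
      (Polynomial.aeval (MvPolynomial.X 0) a - Polynomial.aeval (MvPolynomial.X 1) b
        : MvPolynomial (Fin 2) K)) ↔
    ∃ T : Polynomial K, T.comp f = a ∧ T.comp g = b := by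
  constructor
  · intro h
    refine exists_comp_eq_of_map_C_sub_C_dvd hf hg ?_
    simpa only [map_sub, aeval_vecCons_aeval_X_zero, aeval_vecCons_aeval_X_one]
      using map_dvd (MvPolynomial.aeval (![X, C X] : Fin 2 → K[X][X])) h
  · rintro ⟨T, rfl, rfl⟩
    simpa only [aeval_comp] using sub_dvd_aeval_sub _ _ T

theorem stmt_10 {K : Type*} [Field K]
    (f g a b : Polynomial K)
    (hf : 0 < f.natDegree) (hg : 0 < g.natDegree)
    (ha : 0 < a.natDegree) (hb : 0 < b.natDegree) :
    ((Polynomial.aeval (MvPolynomial.X 0) f - Polynomial.aeval (MvPolynomial.X 1) g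
        : MvPolynomial (Fin 2) K) ∣
      (Polynomial.aeval (MvPolynomial.X 0) a - Polynomial.aeval (MvPolynomial.X 1) b
        : MvPolynomial (Fin 2) K)) ↔
    ∃ T : Polynomial K, T.comp f = a ∧ T.comp g = b :=
  stmt_10_general f g a b hf hg
end

section
/- Let F ∈ F_{q^k}[x] be a nonconstant polynomial of degree at most (q^k - 1)/(q - 1) such that every value F(a) for a ∈ F_{q^k} lies in the subfield F_q. Then F is a minimal value set polynomial over F_{q^k} with value set exactly F_q, i.e., |{F(a) : a ∈ F_{q^k}}| = q = ⌊(q^k - 1)/deg F⌋ + 1. -/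
open Polynomial

theorem stmt_11 {Fq Fqk : Type*} [Field Fq] [Fintype Fq] [Field Fqk] [Fintype Fqk]
    [DecidableEq Fqk] [Algebra Fq Fqk]
    (q k : ℕ) (hq : Fintype.card Fq = q) (hqk : Fintype.card Fqk = q ^ k)
    (F : Polynomial Fqk) (hF : 0 < F.natDegree)
    (hdeg : F.natDegree ≤ (q ^ k - 1) / (q - 1))
    (hval : ∀ a : Fqk, F.eval a ∈ Set.range (algebraMap Fq Fqk)) :
    Finset.image (fun a => F.eval a) Finset.univ =
      Finset.image (algebraMap Fq Fqk) Finset.univ ∧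
    (Finset.image (fun a => F.eval a) Finset.univ).card = q ∧
    q = (q ^ k - 1) / F.natDegree + 1 := by
  have hq2 : 2 ≤ q := by rw [← hq]; exact Fintype.one_lt_card
  set d := F.natDegree with hd
  set V := Finset.image (fun a => F.eval a) (Finset.univ : Finset Fqk) with hV
  set W := Finset.image (algebraMap Fq Fqk) (Finset.univ : Finset Fq) with hW
  have hVW : V ⊆ W := by
    intro x hx
    simp only [hV, Finset.mem_image] at hx
    obtain ⟨a, _, rfl⟩ := hx
    obtain ⟨b, hb⟩ := hval a
    simp only [hW, Finset.mem_image]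
    exact ⟨b, Finset.mem_univ b, hb⟩
  have hWcard : W.card = q := by
    rw [hW, Finset.card_image_of_injective _ (algebraMap Fq Fqk).injective,
      Finset.card_univ, hq]
  have hVle : V.card ≤ q := hWcard ▸ Finset.card_le_card hVW
  have hfiber : ∀ c ∈ V, (Finset.univ.filter fun x => F.eval x = c).card ≤ d := by
    intro c _
    have hne : F - C c ≠ 0 := by
      intro h
      have hFc : F = C c := by
        have := sub_eq_zero.mp h
        exact this
      have : d = 0 := by rw [hd, hFc, natDegree_C]
      omega
    calc (Finset.univ.filter fun x => F.eval x = c).card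
        ≤ (F - C c).roots.toFinset.card := by
          apply Finset.card_le_card
          intro x hx
          simp only [Finset.mem_filter] at hx
          rw [Multiset.mem_toFinset, mem_roots hne]
          simp [hx.2]
      _ ≤ (F - C c).roots.card := Multiset.toFinset_card_le _
      _ ≤ (F - C c).natDegree := (F - C c).card_roots'
      _ = d := by rw [natDegree_sub_C]
  have hmain : q ^ k ≤ d * V.card := by
    have := Finset.card_le_mul_card_image (s := (Finset.univ : Finset Fqk))
      (f := fun a => F.eval a) d hfiber
    rwa [Finset.card_univ, hqk] at this
  have hqk1 : 1 ≤ q ^ k := Nat.one_le_pow _ _ (by omega)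
  have hdq : d * (q - 1) ≤ q ^ k - 1 := (Nat.le_div_iff_mul_le (by omega)).mp hdeg
  have hVq : V.card = q := by
    by_contra h
    have hVlt : V.card ≤ q - 1 := by omega
    have : q ^ k ≤ d * (q - 1) := le_trans hmain (Nat.mul_le_mul_left d hVlt)
    omega
  have hdup : q ^ k - 1 < d * q := by
    rw [hVq] at hmain; omega
  have hlow : q - 1 ≤ (q ^ k - 1) / d := (Nat.le_div_iff_mul_le hF).mpr (by
    calc (q - 1) * d = d * (q - 1) := Nat.mul_comm _ _
      _ ≤ q ^ k - 1 := hdq)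
  have hhigh : (q ^ k - 1) / d < q := Nat.div_lt_iff_lt_mul hF |>.mpr (by
    calc q ^ k - 1 < d * q := hdup
      _ = q * d := Nat.mul_comm _ _)
  refine ⟨Finset.eq_of_subset_of_card_le hVW (by rw [hWcard, hVq]), hVq, by omega⟩
end

section
/- Let q be odd and let g be a monic proper divisor of x^q - x in F_q[x] with g'' = 0. Set f = (g'/g)(x - x^q) ∈ F_q[x] (which is a polynomial since g divides x^q - x, hence g divides x - x^q times g'). Then f(f - 1) = (x^q - x)f'. -/
open Polynomial

theorem stmt_14 {Fq : Type*} [Field Fq] [Fintype Fq]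
    (q : ℕ) (hq : Fintype.card Fq = q) (hodd : Odd q)
    (g h f : Polynomial Fq) (hgm : g.Monic)
    (hdeg1 : 1 ≤ g.natDegree) (hdeg2 : g.natDegree < q)
    (hg'' : Polynomial.derivative (Polynomial.derivative g) = 0)
    (hh : g * h = Polynomial.X ^ q - Polynomial.X)
    (hf : f = -(Polynomial.derivative g * h)) :
    f * (f - 1) = (Polynomial.X ^ q - Polynomial.X) * Polynomial.derivative f := by
  have hq0 : (q : Fq) = 0 := by rw [← hq]; exact FiniteField.cast_card_eq_zero Fq
  have hd : Polynomial.derivative g * h + g * Polynomial.derivative h = -1 := by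
    have := congrArg Polynomial.derivative hh
    rw [derivative_mul, derivative_sub, derivative_X_pow, derivative_X, hq0, map_zero,
      zero_mul, zero_sub] at this
    exact this
  subst hf
  rw [← hh, derivative_neg, derivative_mul, hg'', zero_mul, zero_add]
  linear_combination (Polynomial.derivative g * h) * hd
end

section
/- Let f ∈ F_q[x] be nonconstant and n ≥ 1 an integer with n dividing q - 1, such that n·f(x)·(f(x)^{(q-1)/n} - 1) = (x^q - x)f'(x). Then: (i) p does not divide n and f' ≠ 0; (ii) nq/(n + q - 1) ≤ deg f ≤ n; moreover deg f = n if and only if p does not divide deg f. -/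
open Polynomial

theorem stmt_17 {Fq : Type*} [Field Fq] [Fintype Fq]
    (p q n : ℕ) [Fact p.Prime] [CharP Fq p] (hq : Fintype.card Fq = q)
    (hn1 : 1 ≤ n) (hn : n ∣ q - 1)
    (f : Polynomial Fq) (hf : 0 < f.natDegree)
    (heq : Polynomial.C (n : Fq) * f * (f ^ ((q - 1) / n) - 1) =
      (Polynomial.X ^ q - Polynomial.X) * Polynomial.derivative f) :
    (¬ p ∣ n ∧ Polynomial.derivative f ≠ 0) ∧
    (n * q ≤ f.natDegree * (n + q - 1) ∧ f.natDegree ≤ n) ∧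
    (f.natDegree = n ↔ ¬ p ∣ f.natDegree) := by
  classical
  obtain ⟨s, hp, hcard⟩ := FiniteField.card Fq p
  rw [hq] at hcard
  have hpq : p ∣ q := hcard ▸ dvd_pow_self p s.pos.ne'
  have hq2 : 2 ≤ q := by
    have := Fintype.one_lt_card (α := Fq)
    omega
  obtain ⟨m, hqm⟩ : ∃ m, q - 1 = n * m := hn
  have hmn : (q - 1) / n = m := by rw [hqm, Nat.mul_div_cancel_left _ (by omega)]
  rw [hmn] at heq
  have hqm' : q - 1 = m * n := by rw [hqm, Nat.mul_comm]
  set d := f.natDegree with hd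
  -- p ∤ n
  have hpn : ¬ p ∣ n := by
    intro h
    have h2 : p ∣ q - 1 := h.trans ⟨m, hqm⟩
    have h1 : p ∣ q - (q - 1) := Nat.dvd_sub hpq h2
    have e : q - (q - 1) = 1 := by omega
    rw [e, Nat.dvd_one] at h1
    exact hp.one_lt.ne' h1
  have hCn : (n : Fq) ≠ 0 := fun h => hpn ((CharP.cast_eq_zero_iff Fq p n).mp h)
  have hf0 : f ≠ 0 := fun h => by
    rw [hd, h, natDegree_zero] at hf; exact Nat.lt_irrefl 0 hf
  have hm1 : 1 ≤ m := by
    rcases Nat.eq_zero_or_pos m with h | h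
    · rw [h, mul_zero] at hqm; omega
    · exact h
  have hfm : f ^ m - 1 ≠ 0 := by
    intro h
    have h1 : f ^ m = 1 := by linear_combination (norm := ring_nf) h
    have h2 := natDegree_pow f m
    rw [h1, natDegree_one] at h2
    rcases Nat.mul_eq_zero.mp h2.symm with h3 | h3 <;> omega
  have hXq : (X : Fq[X]) ^ q - X ≠ 0 := by
    intro h
    have h1 : (X : Fq[X]) ^ q = X := by linear_combination (norm := ring_nf) h
    have h2 := natDegree_X_pow (R := Fq) q
    rw [h1, natDegree_X] at h2
    omega
  -- derivative nonzero
  have hd' : derivative f ≠ 0 := by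
    intro h
    rw [h, mul_zero] at heq
    rcases mul_eq_zero.mp heq with h1 | h1
    · rcases mul_eq_zero.mp h1 with h2 | h2
      · exact hCn (C_eq_zero.mp h2)
      · exact hf0 h2
    · exact hfm h1
  -- degrees
  have hdXq : ((X : Fq[X]) ^ q - X).natDegree = q := by
    rw [natDegree_sub_eq_left_of_natDegree_lt (by simp; omega), natDegree_X_pow]
  have hdfm : (f ^ m - 1).natDegree = m * d := by
    have h1 : (1 : Fq[X]).natDegree < (f ^ m).natDegree := by
      rw [natDegree_one, natDegree_pow]; exact Nat.mul_pos hm1 hf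
    rw [natDegree_sub_eq_left_of_natDegree_lt h1, natDegree_pow]
  -- main degree equation
  have E : d + m * d = q + (derivative f).natDegree := by
    have h := congrArg natDegree heq
    rw [natDegree_mul (mul_ne_zero (C_ne_zero.mpr hCn) hf0) hfm,
        natDegree_mul (C_ne_zero.mpr hCn) hf0,
        natDegree_mul hXq hd', natDegree_C, hdfm, hdXq] at h
    omega
  have hdlt : (derivative f).natDegree < d := natDegree_derivative_lt (by omega)
  -- upper bound
  have hdn : d ≤ n := by
    have h1 : m * d ≤ m * n := by omega
    exact Nat.le_of_mul_le_mul_left h1 hm1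
  -- lower bound
  have hlow : n * q ≤ d * (n + q - 1) := by
    have h1 : q ≤ d + m * d := by omega
    have h2 : n * q ≤ n * (d + m * d) := Nat.mul_le_mul_left n h1
    have h3 : n * (d + m * d) = d * (n + (q - 1)) := by rw [hqm]; ring
    rw [h3] at h2
    have h4 : n + (q - 1) = n + q - 1 := by omega
    rwa [h4] at h2
  -- leading coefficient of derivative
  have hlead : (derivative f).coeff (d - 1) = f.leadingCoeff * (d : Fq) := by
    have hc : ((d - 1 : ℕ) : Fq) + 1 = (d : Fq) := by
      rw [← Nat.cast_add_one]; congr 1; omega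
    rw [coeff_derivative, show d - 1 + 1 = d from by omega, hc]
    rfl
  have hiff : d = n ↔ ¬ p ∣ d := by
    constructor
    · intro h
      have hmd : m * d = m * n := by rw [h]
      have he : (derivative f).natDegree = d - 1 := by omega
      intro hpd
      have hc0 : (d : Fq) = 0 := (CharP.cast_eq_zero_iff Fq p d).mpr hpd
      have h0 : (derivative f).coeff (d - 1) = 0 := by rw [hlead, hc0, mul_zero]
      rw [← he] at h0
      exact hd' (leadingCoeff_eq_zero.mp h0)
    · intro hpd
      have hc0 : (d : Fq) ≠ 0 := fun h => hpd ((CharP.cast_eq_zero_iff Fq p d).mp h)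
      have hne : (derivative f).coeff (d - 1) ≠ 0 := by
        rw [hlead]
        exact mul_ne_zero (leadingCoeff_ne_zero.mpr hf0) hc0
      have hge : d - 1 ≤ (derivative f).natDegree := le_natDegree_of_ne_zero hne
      have he : (derivative f).natDegree = d - 1 := by omega
      have hmd : m * d = m * n := by omega
      exact Nat.eq_of_mul_eq_mul_left hm1 hmd
  exact ⟨⟨hpn, hd'⟩, ⟨hlow, hdn⟩, hiff⟩
end

section
/- Let f ∈ F_q[x] be nonconstant and n ≥ 1 with n | q - 1, satisfying n·f(x)·(f(x)^{(q-1)/n} - 1) = (x^q - x)f'(x). Then (n-1)·f'(x)·(f(x)^{(q-1)/n} - 1) = (x^q - x)f''(x); consequently, if f has a simple root then n ≡ 1 (mod p), and n ≡ 1 (mod p) if and only if f'' = 0. -/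
open Polynomial

theorem stmt_18 {Fq : Type*} [Field Fq] [Fintype Fq]
    (p q n : ℕ) [Fact p.Prime] [CharP Fq p] (hq : Fintype.card Fq = q)
    (hn1 : 1 ≤ n) (hn : n ∣ q - 1)
    (f : Polynomial Fq) (hf : 0 < f.natDegree)
    (heq : Polynomial.C (n : Fq) * f * (f ^ ((q - 1) / n) - 1) =
      (Polynomial.X ^ q - Polynomial.X) * Polynomial.derivative f) :
    Polynomial.C ((n : Fq) - 1) * Polynomial.derivative f * (f ^ ((q - 1) / n) - 1) =
      (Polynomial.X ^ q - Polynomial.X) *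
        Polynomial.derivative (Polynomial.derivative f) ∧
    ((∃ α : AlgebraicClosure Fq,
        ((f.map (algebraMap Fq (AlgebraicClosure Fq))).rootMultiplicity α = 1 ∧
          (f.map (algebraMap Fq (AlgebraicClosure Fq))).IsRoot α)) →
      n ≡ 1 [MOD p]) ∧
    (n ≡ 1 [MOD p] ↔ Polynomial.derivative (Polynomial.derivative f) = 0) := by
  have hp := (Fact.out : p.Prime)
  have hq2 : 1 < q := hq ▸ Fintype.one_lt_card
  have hqz : (q : Fq) = 0 := by rw [← hq]; exact FiniteField.cast_card_eq_zero Fq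
  set m := (q - 1) / n with hm
  have hnm : n * m = q - 1 := Nat.mul_div_cancel' hn
  have hm1 : 1 ≤ m := by
    rcases Nat.eq_zero_or_pos m with h | h
    · rw [h, Nat.mul_zero] at hnm; omega
    · exact h
  have hq1 : ((q - 1 : ℕ) : Fq) = -1 := by
    rw [Nat.cast_sub (by omega), hqz, Nat.cast_one]; ring
  have hpq : p ∣ q := by
    obtain ⟨s, _, hcard⟩ := FiniteField.card Fq p
    rw [← hq, hcard]
    exact dvd_pow_self p s.2.ne'
  have hpn : ¬ p ∣ n := by
    intro h
    have h1 : p ∣ q - 1 := h.trans hn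
    have h2 := Nat.dvd_sub hpq h1
    have h3 : q - (q - 1) = 1 := by omega
    rw [h3] at h2
    exact hp.one_lt.ne' (Nat.dvd_one.mp h2)
  have hCn : (n : Fq) ≠ 0 := by
    rw [Ne, CharP.cast_eq_zero_iff Fq p]; exact hpn
  have hf0 : f ≠ 0 := fun h => by simp [h] at hf
  have hfm : f ^ m - 1 ≠ 0 := by
    rw [sub_ne_zero]
    intro h
    have h2 := congrArg natDegree h
    rw [natDegree_pow, natDegree_one] at h2
    have := Nat.mul_eq_zero.mp h2
    omega
  have hX : (X ^ q - X : Fq[X]) ≠ 0 := by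
    intro h
    have h2 := congrArg (fun g => Polynomial.coeff g q) h
    simp [coeff_X, show ¬(1 = q) by omega, show ¬(q = 1) by omega] at h2
  have hf' : derivative f ≠ 0 := by
    intro h
    rw [h, mul_zero] at heq
    rcases mul_eq_zero.mp heq with h1 | h1
    · rcases mul_eq_zero.mp h1 with h2 | h2
      · exact hCn (C_eq_zero.mp h2)
      · exact hf0 h2
    · exact hfm h1
  -- the differentiated identity
  have key : C ((n : Fq) - 1) * derivative f * (f ^ m - 1) =
      (X ^ q - X) * derivative (derivative f) := by
    have h2 := congrArg derivative heq
    simp only [derivative_mul, derivative_sub, derivative_pow, derivative_one,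
      derivative_C, derivative_X, zero_mul, mul_zero, sub_zero, zero_add, mul_one,
      derivative_X_pow] at h2
    have hfm' : f * f ^ (m - 1) = f ^ m := by
      rw [← pow_succ', Nat.sub_add_cancel hm1]
    have e1 : C (n : Fq) * f * (C (m : Fq) * f ^ (m - 1) * derivative f)
        = -(f ^ m * derivative f) := by
      rw [← hfm']
      rw [show C (n:Fq) * f * (C (m:Fq) * f^(m-1) * derivative f)
          = C ((n:Fq) * (m:Fq)) * (f * f^(m-1) * derivative f) from by rw [C_mul]; ring]
      rw [← Nat.cast_mul, hnm, hq1, map_neg, map_one]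
      ring
    rw [e1, hqz] at h2
    simp only [map_zero, zero_mul] at h2
    rw [map_sub, map_one]
    linear_combination h2
  refine ⟨key, ?_, ?_⟩
  · rintro ⟨α, hmult, hroot⟩
    have hrα : Polynomial.eval α (f.map (algebraMap Fq (AlgebraicClosure Fq))) = 0 := hroot
    have hfK : f.map (algebraMap Fq (AlgebraicClosure Fq)) ≠ 0 := by
      rwa [Ne, Polynomial.map_eq_zero_iff (algebraMap Fq (AlgebraicClosure Fq)).injective]
    have hd : Polynomial.eval α
        ((derivative f).map (algebraMap Fq (AlgebraicClosure Fq))) ≠ 0 := by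
      rw [← derivative_map]
      intro h
      have h2 : 1 < (f.map (algebraMap Fq (AlgebraicClosure Fq))).rootMultiplicity α := by
        apply lt_rootMultiplicity_of_isRoot_iterate_derivative_of_mem_nonZeroDivisors hfK
        · intro k hk
          interval_cases k
          · simpa using hroot
          · simpa using h
        · simpa using (one_mem (nonZeroDivisors (AlgebraicClosure Fq)))
      omega
    have heqK := congrArg
      (fun g => Polynomial.eval α (g.map (algebraMap Fq (AlgebraicClosure Fq)))) heq
    simp only [Polynomial.map_mul, Polynomial.map_sub, Polynomial.map_pow,
      Polynomial.map_one, Polynomial.map_X, Polynomial.map_C,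
      eval_mul, eval_sub, eval_pow, eval_one, eval_X, eval_C, hrα] at heqK
    rw [mul_zero, zero_mul] at heqK
    have hαq : α ^ q - α = 0 := by
      rcases mul_eq_zero.mp heqK.symm with h1 | h1
      · exact h1
      · exact absurd h1 hd
    have hkeyK := congrArg
      (fun g => Polynomial.eval α (g.map (algebraMap Fq (AlgebraicClosure Fq)))) key
    simp only [Polynomial.map_mul, Polynomial.map_sub, Polynomial.map_pow,
      Polynomial.map_one, Polynomial.map_X, Polynomial.map_C,
      eval_mul, eval_sub, eval_pow, eval_one, eval_X, eval_C, hrα, hαq,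
      zero_mul] at hkeyK
    rw [zero_pow (by omega : m ≠ 0), zero_sub] at hkeyK
    have h3 : (algebraMap Fq (AlgebraicClosure Fq)) ((n : Fq) - 1) = 0 := by
      rcases mul_eq_zero.mp hkeyK with h1 | h1
      · rcases mul_eq_zero.mp h1 with h2 | h2
        · exact h2
        · exact absurd h2 hd
      · exact absurd h1 (by norm_num)
    have h4 : ((n : Fq) - 1) = 0 :=
      (algebraMap Fq (AlgebraicClosure Fq)).injective (by simpa using h3)
    have h5 : ((n - 1 : ℕ) : Fq) = 0 := by
      rwa [Nat.cast_sub hn1, Nat.cast_one]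
    have h6 : p ∣ n - 1 := (CharP.cast_eq_zero_iff Fq p _).mp h5
    exact ((Nat.modEq_iff_dvd' hn1).mpr h6).symm
  · constructor
    · intro h
      have hd : p ∣ n - 1 := (Nat.modEq_iff_dvd' hn1).mp h.symm
      have hc : ((n : Fq) - 1) = 0 := by
        have := (CharP.cast_eq_zero_iff Fq p (n - 1)).mpr hd
        rwa [Nat.cast_sub hn1, Nat.cast_one] at this
      rw [hc, map_zero, zero_mul, zero_mul] at key
      rcases mul_eq_zero.mp key.symm with h1 | h1
      · exact absurd h1 hX
      · exact h1
    · intro h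
      rw [h, mul_zero] at key
      rcases mul_eq_zero.mp key with h1 | h1
      · rcases mul_eq_zero.mp h1 with h2 | h2
        · have h4 : ((n : Fq) - 1) = 0 := C_eq_zero.mp h2
          have h5 : ((n - 1 : ℕ) : Fq) = 0 := by
            rwa [Nat.cast_sub hn1, Nat.cast_one]
          have h6 : p ∣ n - 1 := (CharP.cast_eq_zero_iff Fq p _).mp h5
          exact ((Nat.modEq_iff_dvd' hn1).mpr h6).symm
        · exact absurd h2 hf'
      · exact absurd h1 hfm
end
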